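/- arXiv:0906.3740 — 6 statements merged into one kernel-verified Lean document; each statement's English description precedes it below -/
import Mathlib

section
/- Let f : (0,∞) → ℝ be a Lipschitz function and α : (0,∞) → ℝ a positive bounded function. Then limsup_{u→∞} (1/u)·(α(u)·f(u) − f(α(u)·u)) ≥ 0. -/
/-!
If the limsup were negative, then for some `δ > 0` and all large `u` we would have
`f (α u * u) ≥ α u * f u + δ * u`. Dividing by `α u * u` shows that `ψ u = f u / u` increases by at
least `δ / M` when passing from `u` to `g u = α u * u`, while the same inequality together with the
linear growth of the Lipschitz function `f` forces `g u → ∞`. Iterating `g` then makes `ψ` unbounded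
at infinity, contradicting the boundedness of `f u / u` that comes from the Lipschitz condition.
-/

open Filter

namespace Filter.Tendsto

variable {ι : Type*} {l : Filter ι} {g : ι → ι} {ψ : ι → ℝ} {c : ℝ}

theorem eventually_add_mul_le_iterate (hg : Tendsto g l l)
    (hstep : ∀ᶠ x in l, ψ x + c ≤ ψ (g x)) (n : ℕ) :
    ∀ᶠ x in l, ψ x + n * c ≤ ψ (g^[n] x) := by
  induction n with
  | zero => simp
  | succ n ih =>
    filter_upwards [hstep, hg.eventually ih] with x hx hgx
    rw [Function.iterate_succ_apply]
    push_cast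
    linarith

theorem not_isBoundedUnder_abs_of_add_le [l.NeBot] (hg : Tendsto g l l) (hc : 0 < c)
    (hstep : ∀ᶠ x in l, ψ x + c ≤ ψ (g x)) :
    ¬ IsBoundedUnder (· ≤ ·) l (fun x => |ψ x|) := by
  rintro ⟨B, hB⟩
  rw [eventually_map] at hB
  obtain ⟨n, hn⟩ := exists_nat_gt (2 * B / c)
  obtain ⟨x, hx, hgx, hinc⟩ :=
    (hB.and (((hg.iterate n).eventually hB).and (hg.eventually_add_mul_le_iterate hstep n))).exists
  rw [div_lt_iff₀ hc] at hn
  linarith [neg_abs_le (ψ x), le_abs_self (ψ (g^[n] x))]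

end Filter.Tendsto

section Lipschitz

variable {f : ℝ → ℝ} {K : ℝ}

theorem abs_le_of_lipschitz_Ioi (hK : 0 ≤ K)
    (hf : ∀ x y, 0 < x → 0 < y → |f x - f y| ≤ K * |x - y|) {x : ℝ} (hx : 0 < x) :
    |f x| ≤ |f 1| + K + K * x := by
  have hdist : |x - 1| ≤ 1 + x := by rw [abs_le]; constructor <;> linarith
  calc |f x| ≤ |f x - f 1| + |f 1| := by simpa using abs_add_le (f x - f 1) (f 1)
    _ ≤ K * (1 + x) + |f 1| := by
      gcongr
      exact (hf x 1 hx one_pos).trans (by gcongr)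
    _ = |f 1| + K + K * x := by ring

theorem abs_div_self_le_of_lipschitz_Ioi (hK : 0 ≤ K)
    (hf : ∀ x y, 0 < x → 0 < y → |f x - f y| ≤ K * |x - y|) {x : ℝ} (hx : 1 ≤ x) :
    |f x / x| ≤ |f 1| + 2 * K := by
  have hx0 : 0 < x := one_pos.trans_le hx
  rw [abs_div, abs_of_pos hx0, div_le_iff₀ hx0]
  nlinarith [abs_le_of_lipschitz_Ioi hK hf hx0, abs_nonneg (f 1)]

theorem tendsto_scaled_atTop_of_add_mul_le (hK : 0 ≤ K)
    (hf : ∀ x y, 0 < x → 0 < y → |f x - f y| ≤ K * |x - y|) {α : ℝ → ℝ}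
    (hα : ∀ u, 0 < u → 0 < α u) {δ : ℝ} (hδ : 0 < δ)
    (hstep : ∀ᶠ u in atTop, α u * f u + δ * u ≤ f (α u * u)) :
    Tendsto (fun u => α u * u) atTop atTop := by
  set A := |f 1| + K
  set D := A + 3 * K + 1
  have hD : 0 < D := by positivity
  have hlin : Tendsto (fun u => (δ * u - A) / D) atTop atTop := by
    simpa only [sub_eq_add_neg, id] using
      (tendsto_atTop_add_const_right _ (-A) (tendsto_id.const_mul_atTop hδ)).atTop_div_const hD
  refine tendsto_atTop_mono' _ ?_ hlin
  filter_upwards [hstep, eventually_ge_atTop 1] with u hu hu1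
  have hu0 : 0 < u := one_pos.trans_le hu1
  have hau : 0 < α u * u := mul_pos (hα u hu0) hu0
  have hfau := abs_le_of_lipschitz_Ioi hK hf hau
  have hψ := abs_div_self_le_of_lipschitz_Ioi hK hf hu1
  have hαfu : α u * f u = α u * u * (f u / u) := by field_simp
  rw [div_le_iff₀ hD]
  nlinarith [neg_abs_le (f u / u), le_abs_self (f (α u * u)), abs_nonneg (f 1)]

end Lipschitz

theorem div_add_div_le_div_mul_of_mul_add_mul_le {x y a u M δ : ℝ} (ha : 0 < a) (haM : a ≤ M)
    (hu : 0 < u) (hδ : 0 ≤ δ) (h : a * x + δ * u ≤ y) :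
    x / u + δ / M ≤ y / (a * u) := by
  calc x / u + δ / M ≤ x / u + δ / a := by gcongr
    _ = (a * x + δ * u) / (a * u) := by field_simp
    _ ≤ y / (a * u) := by gcongr

theorem stmt0 (f α : ℝ → ℝ) (K : ℝ) (hK : 0 ≤ K)
    (hf : ∀ x y, 0 < x → 0 < y → |f x - f y| ≤ K * |x - y|)
    (hα : ∀ u, 0 < u → 0 < α u) (M : ℝ) (hM : ∀ u, 0 < u → α u ≤ M) :
    0 ≤ limsup (fun u => u⁻¹ * (α u * f u - f (α u * u))) atTop := by
  by_cases hbdd : IsBoundedUnder (· ≤ ·) atTop fun u => u⁻¹ * (α u * f u - f (α u * u))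
  swap
  · rw [Real.limsup_of_not_isBoundedUnder hbdd]
  by_contra! hneg
  obtain ⟨δ, hδ, hstep⟩ : ∃ δ > 0, ∀ᶠ u in atTop, α u * f u + δ * u ≤ f (α u * u) := by
    obtain ⟨b, hLb, hb⟩ := exists_between hneg
    refine ⟨-b, neg_pos.2 hb, ?_⟩
    filter_upwards [eventually_lt_of_limsup_lt hLb hbdd, eventually_gt_atTop 0] with u hu hu0
    rw [inv_mul_lt_iff₀ hu0] at hu
    linarith
  have hM0 : 0 < M := (hα 1 one_pos).trans_le (hM 1 one_pos)
  refine (tendsto_scaled_atTop_of_add_mul_le hK hf hα hδ hstep).not_isBoundedUnder_abs_of_add_le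
    (div_pos hδ hM0) (ψ := fun u => f u / u) ?_ ?_
  · filter_upwards [hstep, eventually_gt_atTop 0] with u hu hu0
    exact div_add_div_le_div_mul_of_mul_add_mul_le (hα u hu0) (hM u hu0) hu0 hδ.le hu
  · exact isBoundedUnder_of_eventually_le
      (eventually_ge_atTop 1 |>.mono fun u => abs_div_self_le_of_lipschitz_Ioi hK hf)
end

section
/- Let g : ℝ → ℝ be a bounded function and β : ℝ → ℝ a function bounded above and below (i.e., there exist c ≤ C with c ≤ β(x) ≤ C for all x). Then limsup_{x→∞} (g(x) − g(x + β(x))) ≥ 0. -/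
open Filter

theorem stmt1 (g β : ℝ → ℝ) (Mg : ℝ) (hg : ∀ x, |g x| ≤ Mg)
    (c C : ℝ) (hcC : c ≤ C) (hβ : ∀ x, β x ∈ Set.Icc c C) :
    0 ≤ limsup (fun x => g x - g (x + β x)) atTop := by
  set u : ℝ → ℝ := fun x => g x - g (x + β x) with hu
  set v : ℝ → ℝ := fun x => g (x + β x) with hv
  have hgub : IsBoundedUnder (· ≤ ·) atTop g :=
    isBoundedUnder_of ⟨Mg, fun x => (abs_le.1 (hg x)).2⟩
  have hglb : IsBoundedUnder (· ≥ ·) atTop g :=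
    isBoundedUnder_of ⟨-Mg, fun x => (abs_le.1 (hg x)).1⟩
  have hvub : IsBoundedUnder (· ≤ ·) atTop v :=
    isBoundedUnder_of ⟨Mg, fun x => (abs_le.1 (hg _)).2⟩
  have hvlb : IsBoundedUnder (· ≥ ·) atTop v :=
    isBoundedUnder_of ⟨-Mg, fun x => (abs_le.1 (hg _)).1⟩
  have huub : IsBoundedUnder (· ≤ ·) atTop u :=
    isBoundedUnder_of ⟨2 * Mg, fun x => by
      have h1 := abs_le.1 (hg x); have h2 := abs_le.1 (hg (x + β x))
      simp only [hu]; linarith⟩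
  have hulb : IsBoundedUnder (· ≥ ·) atTop u :=
    isBoundedUnder_of ⟨-(2 * Mg), fun x => by
      have h1 := abs_le.1 (hg x); have h2 := abs_le.1 (hg (x + β x))
      simp only [hu]; linarith⟩
  have hadd : limsup g atTop ≤ limsup u atTop + limsup v atTop := by
    have := limsup_add_le (f := atTop) (u := u) (v := v) hulb huub
      hvlb.isCoboundedUnder_le hvub
    have heq : u + v = g := by funext x; simp [hu, hv]
    rwa [heq] at this
  have htend : Tendsto (fun x => x + β x) atTop atTop :=
    tendsto_atTop_mono (fun x => by simpa using (hβ x).1)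
      (tendsto_atTop_add_const_right atTop c tendsto_id)
  have hvle : limsup v atTop ≤ limsup g atTop := by
    have : limsup v atTop = limsup g (map (fun x => x + β x) atTop) := by
      simp [limsup, map_map]; rfl
    rw [this]
    have hglb' : IsBoundedUnder (· ≥ ·) (map (fun x => x + β x) atTop) g :=
      isBoundedUnder_of ⟨-Mg, fun x => (abs_le.1 (hg x)).1⟩
    exact limsup_le_limsup_of_le htend hglb'.isCoboundedUnder_le hgub
  linarith
end

section
/- Let f : ℕ → ℝ satisfy |f(n+1) − f(n)| ≤ C for all n, for some constant C > 0, and let α : ℕ → ℝ be positive and bounded, with α(n)·n rounded to a natural number L(n) = ⌊α(n)·n⌋ say. Then limsup_{n→∞} (1/n)·(α(n)·f(n) − f(L(n))) ≥ 0, where we extend f piecewise linearly so that f(α(n)n) makes sense; equivalently the discrete version of the calculus lemma holds under the bounded increments hypothesis. -/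
set_option maxHeartbeats 1000000

open Filter

theorem stmt2 (f : ℕ → ℝ) (C : ℝ) (hC : 0 < C) (hf : ∀ n, |f (n + 1) - f n| ≤ C)
    (α : ℕ → ℝ) (δ M : ℝ) (hδ : 0 < δ) (hα : ∀ n, δ ≤ α n ∧ α n ≤ M)
    (F : ℝ → ℝ)
    (hF : ∀ x : ℝ, F x = f ⌊x⌋₊ + (x - ⌊x⌋₊) * (f (⌊x⌋₊ + 1) - f ⌊x⌋₊)) :
    0 ≤ limsup (fun n : ℕ => (1 / (n : ℝ)) * (α n * f n - F (α n * n))) atTop := by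
  set u : ℕ → ℝ := fun n => (1 / (n : ℝ)) * (α n * f n - F (α n * n)) with hu
  have hM : 0 < M := lt_of_lt_of_le hδ (le_trans (hα 0).1 (hα 0).2)
  -- linear growth of f
  have hgrow : ∀ n : ℕ, |f n| ≤ |f 0| + C * n := by
    intro n
    induction n with
    | zero => simp
    | succ n ih =>
      have h1 : |f (n+1)| ≤ |f n| + C := by
        have h2 : f (n+1) = f n + (f (n+1) - f n) := by ring
        calc |f (n+1)| = |f n + (f (n+1) - f n)| := by rw [← h2]
          _ ≤ |f n| + |f (n+1) - f n| := abs_add_le _ _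
          _ ≤ |f n| + C := by linarith [hf n]
      push_cast
      linarith
  set B : ℝ := |f 0| + C with hB
  have hB0 : 0 < B := by positivity
  have hfB : ∀ n : ℕ, 1 ≤ n → |f n| ≤ B * n := by
    intro n hn
    have h1 : (1:ℝ) ≤ n := by exact_mod_cast hn
    nlinarith [hgrow n, abs_nonneg (f 0)]
  -- F is close to f at floor
  have hFclose : ∀ x : ℝ, 0 ≤ x → |F x - f ⌊x⌋₊| ≤ C := by
    intro x hx
    rw [hF x]
    have h1 : (⌊x⌋₊:ℝ) ≤ x := Nat.floor_le hx
    have h2 : x < ⌊x⌋₊ + 1 := Nat.lt_floor_add_one x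
    have h3 : f ⌊x⌋₊ + (x - ⌊x⌋₊) * (f (⌊x⌋₊ + 1) - f ⌊x⌋₊) - f ⌊x⌋₊
        = (x - ⌊x⌋₊) * (f (⌊x⌋₊ + 1) - f ⌊x⌋₊) := by ring
    rw [h3, abs_mul, abs_of_nonneg (by linarith : (0:ℝ) ≤ x - ⌊x⌋₊)]
    calc (x - ⌊x⌋₊) * |f (⌊x⌋₊ + 1) - f ⌊x⌋₊| ≤ 1 * C := by
          apply mul_le_mul (by linarith) (hf _) (abs_nonneg _) zero_le_one
      _ = C := one_mul C
  -- boundedness above of u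
  have hbdd : IsBoundedUnder (· ≤ ·) atTop u := by
    refine ⟨M*B + B + C*M, ?_⟩
    rw [eventually_map]
    filter_upwards [eventually_ge_atTop 1] with n hn
    have hn1 : (1:ℝ) ≤ n := by exact_mod_cast hn
    have hnpos : (0:ℝ) < n := by linarith
    have hα0 : 0 < α n := lt_of_lt_of_le hδ (hα n).1
    have hx0 : (0:ℝ) ≤ α n * n := by positivity
    have hxM : α n * (n:ℝ) ≤ M * n := mul_le_mul_of_nonneg_right (hα n).2 hnpos.le
    have hkx : (⌊α n * (n:ℝ)⌋₊:ℝ) ≤ α n * n := Nat.floor_le hx0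
    have hFb : |F (α n * n)| ≤ B + C*M*n := by
      have h4 := hFclose (α n * n) hx0
      have h5 := hgrow ⌊α n * (n:ℝ)⌋₊
      have h6 : C * (⌊α n * (n:ℝ)⌋₊:ℝ) ≤ C * (M * n) := by
        apply mul_le_mul_of_nonneg_left (hkx.trans hxM) hC.le
      have h7 : |F (α n * n)| ≤ |F (α n * n) - f ⌊α n * (n:ℝ)⌋₊| + |f ⌊α n * (n:ℝ)⌋₊| := by
        calc |F (α n * n)| = |(F (α n * n) - f ⌊α n * (n:ℝ)⌋₊) + f ⌊α n * (n:ℝ)⌋₊| := by ring_nf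
          _ ≤ _ := abs_add_le _ _
      have hBC : B = |f 0| + C := hB
      nlinarith
    have hfn : |f n| ≤ B * n := hfB n hn
    have habs : α n * f n - F (α n * n) ≤ M*B*n + (B + C*M*n) := by
      have h8 : α n * f n ≤ M * (B * n) := by
        calc α n * f n ≤ |α n * f n| := le_abs_self _
          _ = α n * |f n| := by rw [abs_mul, abs_of_pos hα0]
          _ ≤ M * (B * n) := by
              apply mul_le_mul (hα n).2 hfn (abs_nonneg _) hM.le
      have h9 : -F (α n * n) ≤ B + C*M*n := by
        have := (abs_le.mp hFb).1; linarith
      nlinarith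
    show u n ≤ M*B + B + C*M
    have h10 : u n = (α n * f n - F (α n * n)) / n := by rw [hu]; ring
    rw [h10, div_le_iff₀ hnpos]
    have hBn : B ≤ B * n := le_mul_of_one_le_right hB0.le hn1
    nlinarith
  -- contradiction setup
  by_contra hcon
  push_neg at hcon
  set ε : ℝ := -(limsup u atTop)/2 with hεdef
  have hε0 : 0 < ε := by rw [hεdef]; linarith
  have hev : ∀ᶠ n in atTop, u n < -ε := by
    apply eventually_lt_of_limsup_lt _ hbdd
    rw [hεdef]; linarith
  obtain ⟨N, hN⟩ := eventually_atTop.mp hev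
  set εM : ℝ := ε/(2*M) with hεMdef
  have hεM0 : 0 < εM := by rw [hεMdef]; positivity
  obtain ⟨N₁, hN₁⟩ := exists_nat_ge (max (max (N:ℝ) (4/δ)) (2*(C+B)/ε))
  have hN₁N : N ≤ N₁ := by
    have : (N:ℝ) ≤ N₁ := le_trans (le_trans (le_max_left _ _) (le_max_left _ _)) hN₁
    exact_mod_cast this
  have hN₁δ : 4/δ ≤ (N₁:ℝ) := le_trans (le_trans (le_max_right _ _) (le_max_left _ _)) hN₁
  have hN₁ε : 2*(C+B)/ε ≤ (N₁:ℝ) := le_trans (le_max_right _ _) hN₁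
  have hN₁pos : 0 < N₁ := by
    have : (0:ℝ) < N₁ := lt_of_lt_of_le (by positivity) hN₁δ
    exact_mod_cast this
  -- the key step
  have hstep : ∀ n : ℕ, N₁ ≤ n →
      (δ/2) * n ≤ (⌊α n * (n:ℝ)⌋₊ : ℝ) ∧
      f n / n + εM ≤ f ⌊α n * (n:ℝ)⌋₊ / (⌊α n * (n:ℝ)⌋₊ : ℝ) := by
    intro n hn
    have hNn : (N₁:ℝ) ≤ n := Nat.cast_le.mpr hn
    have h4δ : 4/δ ≤ (n:ℝ) := hN₁δ.trans hNn
    have hnR : (0:ℝ) < n := lt_of_lt_of_le (by positivity) h4δ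
    have hn1 : 1 ≤ n := by exact_mod_cast Nat.one_le_iff_ne_zero.mpr (by
      intro h; rw [h] at hnR; simp at hnR)
    have hδn : 4 ≤ δ * n := by
      rw [div_le_iff₀ hδ] at h4δ; linarith
    have hεn : 2*(C+B) ≤ (n:ℝ) * ε := by
      have := hN₁ε.trans hNn
      rw [div_le_iff₀ hε0] at this; linarith
    have hxδ : δ * n ≤ α n * (n:ℝ) := mul_le_mul_of_nonneg_right (hα n).1 hnR.le
    have hxM : α n * (n:ℝ) ≤ M * n := mul_le_mul_of_nonneg_right (hα n).2 hnR.le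
    have hx0 : (0:ℝ) ≤ α n * (n:ℝ) := le_trans (by positivity) hxδ
    set k := ⌊α n * (n:ℝ)⌋₊ with hkdef
    have hk1 : α n * (n:ℝ) - 1 ≤ (k:ℝ) := by linarith [Nat.lt_floor_add_one (α n * (n:ℝ))]
    have hkx : (k:ℝ) ≤ α n * (n:ℝ) := Nat.floor_le hx0
    have hkδ : (δ/2)*n ≤ (k:ℝ) := by linarith
    have hkpos : (0:ℝ) < k := by nlinarith
    refine ⟨hkδ, ?_⟩
    have hun : u n < -ε := hN n (hN₁N.trans hn)
    have hineq : α n * f n - F (α n * (n:ℝ)) < -ε * n := by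
      have h11 : u n = (α n * f n - F (α n * (n:ℝ))) / n := by rw [hu]; ring
      rw [h11, div_lt_iff₀ hnR] at hun
      linarith
    have hfk : α n * f n + ε * n - C ≤ f k := by
      have hclose := hFclose (α n * (n:ℝ)) hx0
      rw [← hkdef] at hclose
      have := (abs_le.mp hclose).2
      linarith
    have hfnB : |f n| ≤ B * n := hfB n hn1
    have key : (ε/2) * n * n ≤ n * f k - k * f n := by
      have h1 : n * (α n * f n + ε*n - C) ≤ n * f k :=
        mul_le_mul_of_nonneg_left hfk hnR.le
      have h2 : (k:ℝ) * f n ≤ α n * (n:ℝ) * f n + B * n := by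
        have habs : ((k:ℝ) - α n * (n:ℝ)) * f n ≤ |(k:ℝ) - α n * (n:ℝ)| * |f n| := by
          calc ((k:ℝ) - α n * (n:ℝ)) * f n ≤ |((k:ℝ) - α n * (n:ℝ)) * f n| := le_abs_self _
            _ = |(k:ℝ) - α n * (n:ℝ)| * |f n| := abs_mul _ _
        have h2a : |(k:ℝ) - α n * (n:ℝ)| ≤ 1 := by
          rw [abs_le]; constructor <;> linarith
        have h2b : |(k:ℝ) - α n * (n:ℝ)| * |f n| ≤ 1 * (B * n) :=
          mul_le_mul h2a hfnB (abs_nonneg _) zero_le_one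
        nlinarith
      nlinarith [mul_nonneg (sub_nonneg.mpr hεn) hnR.le]
    have h3 : f k / k - f n / n = ((n:ℝ) * f k - k * f n) / (n * k) := by
      field_simp
    have h4 : (ε/2) * n * n / ((n:ℝ) * k) ≤ ((n:ℝ) * f k - k * f n) / (n * k) := by
      gcongr
    have h5 : (ε/2) * n * n / ((n:ℝ) * k) = (ε/2) * ((n:ℝ)/k) := by
      field_simp
    have h6 : εM ≤ (ε/2) * ((n:ℝ)/k) := by
      have h6a : (1:ℝ)/M ≤ (n:ℝ)/k := by
        rw [div_le_div_iff₀ hM hkpos]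
        nlinarith [hkx.trans hxM]
      calc εM = (ε/2) * (1/M) := by rw [hεMdef]; ring
        _ ≤ (ε/2) * ((n:ℝ)/k) := by
            apply mul_le_mul_of_nonneg_left h6a (by positivity)
    linarith
  -- iteration
  obtain ⟨K, hK⟩ := exists_nat_gt ((2*B) / εM)
  have hKε : 2*B < K * εM := by
    rw [div_lt_iff₀ hεM0] at hK; linarith
  set ρ : ℝ := min (δ/2) 1 with hρdef
  have hρ0 : 0 < ρ := lt_min (by positivity) one_pos
  have hρ1 : ρ ≤ 1 := min_le_right _ _
  obtain ⟨n₀, hn₀⟩ := exists_nat_ge ((N₁:ℝ) / ρ^K)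
  have hρK : (N₁:ℝ) ≤ ρ^K * n₀ := by
    rw [div_le_iff₀ (pow_pos hρ0 K)] at hn₀; linarith [mul_comm ((n₀:ℝ)) (ρ^K)]
  set g : ℕ → ℕ := fun i => (fun m : ℕ => ⌊α m * (m:ℝ)⌋₊)^[i] n₀ with hgdef
  have hg0 : g 0 = n₀ := rfl
  have hgsucc : ∀ i, g (i+1) = ⌊α (g i) * ((g i):ℝ)⌋₊ := by
    intro i
    rw [hgdef]
    exact Function.iterate_succ_apply' _ i n₀
  have main : ∀ i, i ≤ K → ρ^i * n₀ ≤ ((g i) : ℝ) ∧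
      f n₀ / n₀ + i * εM ≤ f (g i) / ((g i):ℝ) := by
    intro i hi
    induction i with
    | zero => simp [hg0]
    | succ i ih =>
      obtain ⟨h1, h2⟩ := ih (Nat.le_of_succ_le hi)
      have hρmon : ρ^K ≤ ρ^i := pow_le_pow_of_le_one hρ0.le hρ1 (Nat.le_of_succ_le hi)
      have hn₀0 : (0:ℝ) ≤ n₀ := Nat.cast_nonneg _
      have hgiN : N₁ ≤ g i := by
        have hc : (N₁:ℝ) ≤ (g i : ℝ) := by
          calc (N₁:ℝ) ≤ ρ^K * n₀ := hρK
            _ ≤ ρ^i * n₀ := mul_le_mul_of_nonneg_right hρmon hn₀0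
            _ ≤ g i := h1
        exact_mod_cast hc
      obtain ⟨hs1, hs2⟩ := hstep (g i) hgiN
      constructor
      · calc ρ^(i+1) * n₀ = ρ * (ρ^i * n₀) := by ring
          _ ≤ ρ * (g i : ℝ) := mul_le_mul_of_nonneg_left h1 hρ0.le
          _ ≤ (δ/2) * (g i : ℝ) := by
              apply mul_le_mul_of_nonneg_right (min_le_left _ _) (Nat.cast_nonneg _)
          _ ≤ ((g (i+1)) : ℝ) := by rw [hgsucc i]; exact hs1
      · rw [hgsucc i]
        push_cast
        linarith [hs2, h2]
  obtain ⟨h1, h2⟩ := main K le_rfl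
  have hgK1 : 1 ≤ g K := by
    have hc : (N₁:ℝ) ≤ (g K : ℝ) := le_trans hρK h1
    have : N₁ ≤ g K := by exact_mod_cast hc
    omega
  have hn₀1 : 1 ≤ n₀ := by
    have hc : (N₁:ℝ) ≤ (n₀ : ℝ) := by
      calc (N₁:ℝ) ≤ ρ^K * n₀ := hρK
        _ ≤ 1 * n₀ := by
            apply mul_le_mul_of_nonneg_right (pow_le_one₀ hρ0.le hρ1) (Nat.cast_nonneg _)
        _ = n₀ := one_mul _
    have : N₁ ≤ n₀ := by exact_mod_cast hc
    omega
  have hgKpos : (0:ℝ) < g K := by exact_mod_cast hgK1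
  have hn₀pos : (0:ℝ) < n₀ := by exact_mod_cast hn₀1
  have hfK : f (g K) / (g K : ℝ) ≤ B := by
    rw [div_le_iff₀ hgKpos]
    have := (abs_le.mp (hfB (g K) hgK1)).2
    linarith
  have hfn₀ : -B ≤ f n₀ / (n₀ : ℝ) := by
    rw [le_div_iff₀ hn₀pos]
    have := (abs_le.mp (hfB n₀ hn₀1)).1
    linarith
  nlinarith
end

section
/- There exist Lipschitz functions f₁, f₂ : (0,∞) → ℝ and C¹ functions α₁, α₂ : (0,∞) → ℝ with α_k(u) > b > 0, α_k bounded, and |u·α_k'(u)| ≤ C for all u > 0, such that for some δ > 0 and all u > 0, (1/u)·Σ_{k=1}^{2} (α_k(u)·f_k(u) − f_k(α_k(u)·u)) ≤ −δ. In particular, the multi-term calculus lemma fails if the hypothesis |u α_k'(u)| → 0 is weakened to |u α_k'(u)| ≤ C. -/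
/-!
Write `L = log u` and `y = L + kπ/2`. Since `log (α_k(u) u) = L + cos y`, the quantity
`(α_k(u) f_k(u) - f_k(α_k(u) u)) / u` is `e^{cos y} (sin y - sin (y + cos y))`. Expanding
`sin (y + c) = sin y cos c + c sin c` with `c = cos y` bounds this by `-e⁻¹ c² / 3`, since
`c sin c + cos c - 1 ≥ c²/2 - c⁴/6`. For `k = 1, 2` the squares `c²` are `sin² L` and `cos² L`,
which sum to `1`.
-/

open Real

namespace MultiTermCounterexample

noncomputable def f (k : ℕ) (u : ℝ) : ℝ := u * sin (log u + k * π / 2)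

noncomputable def α (k : ℕ) (u : ℝ) : ℝ := exp (cos (log u + k * π / 2))

noncomputable def defect (y : ℝ) : ℝ := exp (cos y) * (sin y - sin (y + cos y))

lemma sq_div_two_sub_pow_four_div_six_le (x : ℝ) :
    x ^ 2 / 2 - x ^ 4 / 6 ≤ x * sin x + cos x - 1 := by
  wlog hx : 0 ≤ x generalizing x
  · simpa [sin_neg, cos_neg, Even.neg_pow (by decide : Even 4)] using this (-x) (by linarith)
  have hsin : x * (x - x ^ 3 / 6) ≤ x * sin x := by
    rcases hx.eq_or_lt with rfl | hpos
    · simp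
    · exact mul_le_mul_of_nonneg_left (sin_gt_sub_cube hpos).le hx
  nlinarith [one_sub_sq_div_two_le_cos (x := x)]

lemma defect_le (y : ℝ) : defect y ≤ -(exp (-1) * cos y ^ 2 / 3) := by
  set c := cos y
  have hc : c ^ 2 ≤ 1 := by simpa [c] using cos_sq_le_one y
  have hsin_add : sin (y + c) = sin y * cos c + c * sin c := by rw [sin_add]
  have hbracket : sin y - sin (y + c) ≤ -(c ^ 2 / 3) := by
    have := sq_div_two_sub_pow_four_div_six_le c
    nlinarith [sin_le_one y, cos_le_one c]
  have hexp : exp (-1) ≤ exp c := exp_le_exp.2 (neg_one_le_cos y)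
  calc defect y = exp c * (sin y - sin (y + c)) := rfl
    _ ≤ exp c * -(c ^ 2 / 3) := mul_le_mul_of_nonneg_left hbracket (exp_pos c).le
    _ ≤ exp (-1) * -(c ^ 2 / 3) := by nlinarith [sq_nonneg c]
    _ = -(exp (-1) * c ^ 2 / 3) := by ring

lemma defect_add_defect_add_pi_div_two_le (y : ℝ) :
    defect y + defect (y + π / 2) ≤ -(exp (-1) / 3) := by
  have h₁ := defect_le y
  have h₂ := defect_le (y + π / 2)
  rw [cos_add_pi_div_two, neg_sq] at h₂
  calc defect y + defect (y + π / 2)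
      ≤ -(exp (-1) * cos y ^ 2 / 3) + -(exp (-1) * sin y ^ 2 / 3) := add_le_add h₁ h₂
    _ = -(exp (-1) / 3) := by linear_combination (-exp (-1) / 3) * sin_sq_add_cos_sq y

lemma α_mul_f_sub_f_α_mul (k : ℕ) {u : ℝ} (hu : 0 < u) :
    α k u * f k u - f k (α k u * u) = u * defect (log u + k * π / 2) := by
  have hlog : log (α k u * u) = cos (log u + k * π / 2) + log u := by
    rw [α, log_mul (exp_pos _).ne' hu.ne', log_exp]
  rw [f, f, hlog, defect, α]
  ring_nf

lemma hasDerivAt_f (k : ℕ) {u : ℝ} (hu : 0 < u) :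
    HasDerivAt (f k) (sin (log u + k * π / 2) + cos (log u + k * π / 2)) u := by
  have h := (hasDerivAt_id' u).mul (((hasDerivAt_log hu.ne').add_const (k * π / 2)).sin)
  exact h.congr_deriv (by field_simp)

lemma abs_f_sub_le (k : ℕ) {x y : ℝ} (hx : 0 < x) (hy : 0 < y) :
    |f k x - f k y| ≤ 2 * |x - y| := by
  have hderiv : ∀ v ∈ Set.Ioi (0 : ℝ), HasDerivWithinAt (f k)
      (sin (log v + k * π / 2) + cos (log v + k * π / 2)) (Set.Ioi 0) v :=
    fun v hv => (hasDerivAt_f k hv).hasDerivWithinAt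
  have hbound : ∀ v ∈ Set.Ioi (0 : ℝ),
      ‖sin (log v + k * π / 2) + cos (log v + k * π / 2)‖ ≤ 2 := fun v _ =>
    calc _ ≤ |sin (log v + k * π / 2)| + |cos (log v + k * π / 2)| := abs_add_le _ _
      _ ≤ 1 + 1 := add_le_add (abs_sin_le_one _) (abs_cos_le_one _)
      _ = 2 := by norm_num
  exact (convex_Ioi 0).norm_image_sub_le_of_norm_hasDerivWithin_le hderiv hbound hy hx

lemma exp_neg_one_le_α (k : ℕ) (u : ℝ) : exp (-1) ≤ α k u :=
  exp_le_exp.2 (neg_one_le_cos _)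

lemma α_le_three (k : ℕ) (u : ℝ) : α k u ≤ 3 :=
  (exp_le_exp.2 (cos_le_one _)).trans exp_one_lt_three.le

lemma hasDerivAt_α (k : ℕ) {u : ℝ} (hu : 0 < u) :
    HasDerivAt (α k) (-(α k u * sin (log u + k * π / 2)) / u) u := by
  have h := ((hasDerivAt_log hu.ne').add_const (k * π / 2)).cos.exp
  exact h.congr_deriv (by rw [α]; ring)

lemma abs_mul_deriv_α_le (k : ℕ) {u : ℝ} (hu : 0 < u) : |u * deriv (α k) u| ≤ 3 := by
  rw [(hasDerivAt_α k hu).deriv, mul_div_cancel₀ _ hu.ne', abs_neg, abs_mul,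
    abs_of_pos (show 0 < α k u from exp_pos _)]
  calc α k u * |sin (log u + k * π / 2)| ≤ 3 * 1 :=
        mul_le_mul (α_le_three k u) (abs_sin_le_one _) (abs_nonneg _) (by norm_num)
    _ = 3 := by norm_num

end MultiTermCounterexample

open MultiTermCounterexample in
theorem stmt3 : ∃ (f₁ f₂ α₁ α₂ : ℝ → ℝ) (b C K δ : ℝ),
    0 < b ∧ 0 < C ∧ 0 < δ ∧
    (∀ x y, 0 < x → 0 < y → |f₁ x - f₁ y| ≤ K * |x - y|) ∧
    (∀ x y, 0 < x → 0 < y → |f₂ x - f₂ y| ≤ K * |x - y|) ∧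
    (∀ u, 0 < u → b < α₁ u) ∧ (∀ u, 0 < u → b < α₂ u) ∧
    (∀ u, 0 < u → α₁ u ≤ C) ∧ (∀ u, 0 < u → α₂ u ≤ C) ∧
    DifferentiableOn ℝ α₁ (Set.Ioi 0) ∧ DifferentiableOn ℝ α₂ (Set.Ioi 0) ∧
    (∀ u, 0 < u → |u * deriv α₁ u| ≤ C) ∧ (∀ u, 0 < u → |u * deriv α₂ u| ≤ C) ∧
    (∀ u, 0 < u →
      (1 / u) * ((α₁ u * f₁ u - f₁ (α₁ u * u)) + (α₂ u * f₂ u - f₂ (α₂ u * u))) ≤ -δ) := by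
  have hb : exp (-1) / 2 < exp (-1) := half_lt_self (exp_pos _)
  refine ⟨f 1, f 2, α 1, α 2, exp (-1) / 2, 3, 2, exp (-1) / 3, by positivity, by norm_num,
    by positivity, fun x y => abs_f_sub_le 1, fun x y => abs_f_sub_le 2,
    fun u _ => hb.trans_le (exp_neg_one_le_α 1 u), fun u _ => hb.trans_le (exp_neg_one_le_α 2 u),
    fun u _ => α_le_three 1 u, fun u _ => α_le_three 2 u,
    fun u hu => (hasDerivAt_α 1 hu).differentiableAt.differentiableWithinAt,
    fun u hu => (hasDerivAt_α 2 hu).differentiableAt.differentiableWithinAt,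
    fun u => abs_mul_deriv_α_le 1, fun u => abs_mul_deriv_α_le 2, fun u hu => ?_⟩
  rw [α_mul_f_sub_f_α_mul 1 hu, α_mul_f_sub_f_α_mul 2 hu, ← mul_add, one_div,
    inv_mul_cancel_left₀ hu.ne']
  convert defect_add_defect_add_pi_div_two_le (log u + π / 2) using 3 <;> push_cast <;> ring
end

section
/- For h(x) = sin x and c(x) = e^{cos x}, with f(x) = x·h(log x) and α(x) = c(log x), one has α(u)·f(u) − f(α(u)·u) = u·c(log u)·(h(log u) − h(log u + log c(log u))) ≤ 0 for all u > 0. -/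
/-! With `c = cos t`, `sin (t + c) - sin t = c sin c - (1 - cos c) sin t ≥ c sin c - (1 - cos c)`,
and `1 - cos c ≤ c sin c` for `c² ≤ 3` follows from `cos c ≥ 1 - c²/2` and `c sin c ≥ c² - c⁴/6`.
The identity itself is `log (α u * u) = log u + cos (log u)`. -/

open Real

lemma Real.one_sub_cos_le_mul_sin_of_pos {x : ℝ} (hx₀ : 0 < x) (hx : x ^ 2 ≤ 3) :
    1 - cos x ≤ x * sin x := by
  have hsin : x * (x - x ^ 3 / 6) ≤ x * sin x :=
    mul_le_mul_of_nonneg_left (sin_gt_sub_cube hx₀).le hx₀.le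
  nlinarith [one_sub_sq_div_two_le_cos (x := x), sq_nonneg x]

lemma Real.one_sub_cos_le_mul_sin {x : ℝ} (hx : x ^ 2 ≤ 3) : 1 - cos x ≤ x * sin x := by
  rcases lt_trichotomy x 0 with hneg | rfl | hpos
  · simpa [cos_neg, sin_neg] using
      one_sub_cos_le_mul_sin_of_pos (neg_pos.2 hneg) (by rwa [neg_sq])
  · simp
  · exact one_sub_cos_le_mul_sin_of_pos hpos hx

lemma Real.sin_le_sin_add_cos (t : ℝ) : sin t ≤ sin (t + cos t) := by
  have hc : 1 - cos (cos t) ≤ cos t * sin (cos t) :=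
    one_sub_cos_le_mul_sin (by linarith [cos_sq_le_one t])
  have hsin : (1 - cos (cos t)) * sin t ≤ 1 - cos (cos t) :=
    mul_le_of_le_one_right (by linarith [cos_le_one (cos t)]) (sin_le_one t)
  rw [sin_add]
  linarith

theorem stmt4 (f α : ℝ → ℝ) (hf : ∀ x, f x = x * Real.sin (Real.log x))
    (hα : ∀ x, α x = Real.exp (Real.cos (Real.log x))) :
    ∀ u, 0 < u →
      α u * f u - f (α u * u) =
        u * Real.exp (Real.cos (Real.log u)) *
          (Real.sin (Real.log u) - Real.sin (Real.log u + Real.cos (Real.log u))) ∧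
      α u * f u - f (α u * u) ≤ 0 := by
  intro u hu
  have hlog : log (α u * u) = log u + cos (log u) := by
    rw [hα, log_mul (exp_ne_zero _) hu.ne', log_exp, add_comm]
  have heq : α u * f u - f (α u * u) =
      u * exp (cos (log u)) * (sin (log u) - sin (log u + cos (log u))) := by
    rw [hf, hf, hlog, hα]
    ring
  refine ⟨heq, heq ▸ mul_nonpos_of_nonneg_of_nonpos (by positivity) ?_⟩
  linarith [sin_le_sin_add_cos (log u)]
end

section
/- Let μ̃_P be the Bernoulli measure with cylinder weights Π_{l=1}^n (p_{i_l j_l}/p_{i_l})·(a_{i_l j_l k_l}^{t(P)}/Σ_k a_{i_l j_l k}^{t(P)}). Then for P-a.e. ω (and p-a.e. i), log μ̃_P(B_n(ω)) / Σ_{l=1}^n log b_{i_l j_l} → λ(P) + t(P), where λ(P) = (Σ_{i,j} p_{ij} log p_{ij} − Σ_i p_i log p_i)/(Σ_{i,j} p_{ij} log b_{ij}) and t(P) is the unique real in [0,1] with Σ_{i,j} p_{ij} log(Σ_k a_{ijk}^{t(P)}) = 0. -/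
/-!
Under the cylinder condition the letters `x 0, x 1, …` are i.i.d. with law `tiltedWeight P a tP`
(`μ` is the infinite product of its one-dimensional marginal), so by the strong law of large
numbers the partial sums of `log (P / p)`, `log a`, `log b` and `log (a ^ tP / ∑ a ^ tP)` along
`x` grow linearly, at rates equal to their expectations `F`, `A`, `H`, `G`. After taking
logarithms, `L x n` is the last time the partial sums of `log a` stay above `∑ l < n, log b`, so
`∑ l < n, log b ∼ A · L x n` and the ratio tends to `F / H + G / A`. Finally `F / H = lamP`
because the fibre sums of the weights are the `P i j`, and `G = tP · A` by the equation
defining `tP`.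
-/

open MeasureTheory

abbrev Alph (m : ℕ) (mi : Fin m → ℕ) (mij : (i : Fin m) → Fin (mi i) → ℕ) : Type :=
  Σ i : Fin m, Σ j : Fin (mi i), Fin (mij i j)

open ProbabilityTheory Filter Finset Topology

instance Sigma.instDiscreteMeasurableSpace {α : Type*} {β : α → Type*}
    [m : ∀ a, MeasurableSpace (β a)] [∀ a, DiscreteMeasurableSpace (β a)] :
    DiscreteMeasurableSpace (Σ a, β a) where
  forall_measurableSet s := by
    suffices h : MeasurableSet[⨅ a, (m a).map (Sigma.mk a)] s from h
    exact MeasurableSpace.measurableSet_iInf.2 fun a =>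
      MeasurableSet.of_discrete (s := Sigma.mk a ⁻¹' s)

section SequenceSpace

variable {A : Type*} [MeasurableSpace A]

theorem ae_tendsto_average_infinitePi (ν : Measure A) [IsProbabilityMeasure ν] {φ : A → ℝ}
    (hφ : Measurable φ) (hint : Integrable φ ν) :
    ∀ᵐ x ∂Measure.infinitePi (fun _ : ℕ => ν),
      Tendsto (fun n : ℕ => (∑ l ∈ range n, φ (x l)) / n) atTop (𝓝 (∫ u, φ u ∂ν)) := by
  have heval (l : ℕ) := measurePreserving_eval_infinitePi (fun _ : ℕ => ν) l
  have hlaw (l : ℕ) : IdentDistrib (fun x : ℕ → A => φ (x l)) φ (Measure.infinitePi _) ν :=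
    ⟨(hφ.comp (measurable_pi_apply l)).aemeasurable, hφ.aemeasurable, by
      rw [← (heval l).map_eq, Measure.map_map hφ (heval l).measurable]; rfl⟩
  have h := strong_law_ae_real (fun l (x : ℕ → A) => φ (x l)) ((hlaw 0).integrable_iff.2 hint)
    (fun i j hij => (iIndepFun_infinitePi (X := fun _ => φ) fun _ => hφ).indepFun hij)
    (fun l => (hlaw l).trans (hlaw 0).symm)
  rwa [(hlaw 0).integral_eq] at h

variable [Countable A] [MeasurableSingletonClass A] [Nonempty A]

theorem map_restrict_eq_pi_of_cylinder {μ : Measure (ℕ → A)} {ν : Measure A} [SigmaFinite ν]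
    (hcyl : ∀ (n : ℕ) (x : ℕ → A), μ {x' | ∀ l < n, x' l = x l} = ∏ l ∈ range n, ν {x l})
    (n : ℕ) : μ.map (fun (x : ℕ → A) (l : Fin n) => x l) = Measure.pi fun _ => ν := by
  refine Measure.ext_iff_singleton.2 fun v => ?_
  set y : ℕ → A := fun l => if h : l < n then v ⟨l, h⟩ else Classical.arbitrary A
  have hfiber : (fun (x : ℕ → A) (l : Fin n) => x l) ⁻¹' {v} = {x' | ∀ l < n, x' l = y l} := by
    ext x
    simp only [Set.mem_preimage, Set.mem_singleton_iff, funext_iff, Set.mem_ofPred_eq, y]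
    exact ⟨fun h l hl => by rw [dif_pos hl, ← h ⟨l, hl⟩],
      fun h l => by rw [h l l.isLt, dif_pos l.isLt]⟩
  rw [Measure.map_apply (by fun_prop) (measurableSet_singleton v), hfiber, hcyl,
    Measure.pi_singleton, ← Fin.prod_univ_eq_prod_range]
  simp only [y, Fin.is_lt, dif_pos]

theorem eq_infinitePi_of_cylinder {μ : Measure (ℕ → A)} {ν : Measure A} [IsProbabilityMeasure ν]
    (hcyl : ∀ (n : ℕ) (x : ℕ → A), μ {x' | ∀ l < n, x' l = x l} = ∏ l ∈ range n, ν {x l}) :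
    μ = Measure.infinitePi fun _ => ν := by
  refine Measure.eq_infinitePi _ fun s t ht => ?_
  set n := s.sup id + 1
  have hs : s ⊆ range n := fun l hl => mem_range.2 (Nat.lt_succ_of_le (le_sup (f := id) hl))
  have hbox : Set.pi (↑s) t = (fun (x : ℕ → A) (l : Fin n) => x l) ⁻¹'
      Set.univ.pi fun l : Fin n => if (l : ℕ) ∈ s then t l else Set.univ := by
    ext x
    simp only [Set.mem_pi, Finset.mem_coe, Set.mem_preimage, Set.mem_univ, true_implies]
    refine ⟨fun h l => ?_, fun h l hl => ?_⟩
    · split_ifs with hl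
      exacts [h l hl, Set.mem_univ _]
    · simpa [hl] using h ⟨l, mem_range.1 (hs hl)⟩
  rw [hbox, ← Measure.map_apply (by fun_prop) (.univ_pi fun l => by split_ifs <;> simp [ht]),
    map_restrict_eq_pi_of_cylinder hcyl, Measure.pi_pi]
  simp only [apply_ite, measure_univ]
  rw [Fin.prod_univ_eq_prod_range (fun l => if l ∈ s then ν (t l) else 1), prod_ite_mem,
    inter_eq_right.2 hs]

end SequenceSpace

section CylinderWeights

variable {A : Type*} [MeasurableSpace A] {μ : Measure (ℕ → A)} {w : A → ℝ}
  (hcyl : ∀ (n : ℕ) (x : ℕ → A),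
    μ {x' | ∀ l < n, x' l = x l} = ENNReal.ofReal (∏ l ∈ range n, w (x l)))
include hcyl

theorem isProbabilityMeasure_map_eval_zero [Nonempty A] :
    IsProbabilityMeasure (μ.map fun x => x 0) :=
  have : IsProbabilityMeasure μ := ⟨by simpa using hcyl 0 fun _ => Classical.arbitrary A⟩
  Measure.isProbabilityMeasure_map (measurable_pi_apply 0).aemeasurable

theorem map_eval_zero_singleton [MeasurableSingletonClass A] (u : A) :
    μ.map (fun x => x 0) {u} = ENNReal.ofReal (w u) := by
  rw [Measure.map_apply (measurable_pi_apply 0) (measurableSet_singleton u)]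
  have h := hcyl 1 fun _ => u
  simp only [Nat.lt_one_iff, forall_eq, range_one, prod_singleton] at h
  exact h

variable [MeasurableSingletonClass A] [Nonempty A] (hw : ∀ u, 0 ≤ w u)
include hw

theorem eq_infinitePi_map_eval_zero [Countable A] :
    μ = Measure.infinitePi fun _ => μ.map (fun x => x 0) :=
  have := isProbabilityMeasure_map_eval_zero hcyl
  eq_infinitePi_of_cylinder fun n x => by
    simp only [hcyl, ENNReal.ofReal_prod_of_nonneg fun l _ => hw (x l),
      map_eval_zero_singleton hcyl]

theorem sum_eq_one_of_cylinder [Fintype A] : ∑ u, w u = 1 := by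
  have := isProbabilityMeasure_map_eval_zero hcyl
  have h := sum_measure_singleton (μ := μ.map fun x => x 0) (s := univ)
  rw [coe_univ, measure_univ] at h
  simp only [map_eval_zero_singleton hcyl, ← ENNReal.ofReal_sum_of_nonneg fun u _ => hw u] at h
  exact ENNReal.ofReal_eq_one.1 h

theorem ae_tendsto_average_of_cylinder [Fintype A] (φ : A → ℝ) :
    ∀ᵐ x ∂μ, Tendsto (fun n : ℕ => (∑ l ∈ range n, φ (x l)) / n) atTop
      (𝓝 (∑ u, w u * φ u)) := by
  have := isProbabilityMeasure_map_eval_zero hcyl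
  have h := ae_tendsto_average_infinitePi (μ.map fun x => x 0) (φ := φ) .of_discrete .of_finite
  rw [← eq_infinitePi_map_eval_zero hcyl hw, integral_fintype .of_finite] at h
  simpa only [Measure.real, map_eval_zero_singleton hcyl, ENNReal.toReal_ofReal (hw _),
    smul_eq_mul] using h

end CylinderWeights

theorem prod_le_prod_iff_sum_log_le {ι : Type*} {s t : Finset ι} {f g : ι → ℝ}
    (hf : ∀ i ∈ s, 0 < f i) (hg : ∀ i ∈ t, 0 < g i) :
    ∏ i ∈ s, f i ≤ ∏ i ∈ t, g i ↔ ∑ i ∈ s, Real.log (f i) ≤ ∑ i ∈ t, Real.log (g i) := by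
  rw [← Real.log_le_log_iff (prod_pos hf) (prod_pos hg), Real.log_prod fun i hi => (hf i hi).ne',
    Real.log_prod fun i hi => (hg i hi).ne']

section Hitting

theorem tendsto_div_of_le_of_le {u v : ℕ → ℝ} {K : ℕ → ℕ} {α : ℝ}
    (hu : Tendsto (fun k : ℕ => u k / k) atTop (𝓝 α)) (hK : Tendsto K atTop atTop)
    (hlow : ∀ᶠ n in atTop, u (K n + 1) ≤ v n) (hup : ∀ᶠ n in atTop, v n ≤ u (K n)) :
    Tendsto (fun n => v n / K n) atTop (𝓝 α) := by
  have hsucc : Tendsto (fun k : ℕ => u (k + 1) / k) atTop (𝓝 α) := by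
    have h := (hu.comp (tendsto_add_atTop_nat 1)).mul
      ((tendsto_one_div_atTop_nhds_zero_nat (𝕜 := ℝ)).const_add 1)
    rw [add_zero, mul_one] at h
    refine h.congr' ?_
    filter_upwards [eventually_ge_atTop 1] with k hk
    have : (k : ℝ) ≠ 0 := by positivity
    simp only [Function.comp_apply, Nat.cast_add, Nat.cast_one]
    field_simp
  refine tendsto_of_tendsto_of_tendsto_of_le_of_le' (hsucc.comp hK) (hu.comp hK) ?_ ?_
  · filter_upwards [hlow] with n h using div_le_div_of_nonneg_right h (Nat.cast_nonneg _)
  · filter_upwards [hup] with n h using div_le_div_of_nonneg_right h (Nat.cast_nonneg _)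

variable {Sa Sb : ℕ → ℝ} {K : ℕ → ℕ}

theorem tendsto_atTop_of_isGreatest (hSb : Tendsto Sb atTop atBot)
    (hK : ∀ᶠ n in atTop, IsGreatest {k | 1 ≤ k ∧ Sb n ≤ Sa k} (K n)) :
    Tendsto K atTop atTop := by
  refine tendsto_atTop.2 fun c => ?_
  filter_upwards [hK, hSb.eventually (eventually_le_atBot (Sa (max c 1)))] with n hn hsb
  exact (le_max_left c 1).trans (hn.2 ⟨le_max_right c 1, hsb⟩)

theorem tendsto_add_div_of_isGreatest {Sf Sg : ℕ → ℝ} {F α H G : ℝ} (hα : α ≠ 0) (hH : H < 0)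
    (hf : Tendsto (fun n : ℕ => Sf n / n) atTop (𝓝 F))
    (ha : Tendsto (fun k : ℕ => Sa k / k) atTop (𝓝 α))
    (hb : Tendsto (fun n : ℕ => Sb n / n) atTop (𝓝 H))
    (hg : Tendsto (fun k : ℕ => Sg k / k) atTop (𝓝 G))
    (hK : ∀ᶠ n in atTop, IsGreatest {k | 1 ≤ k ∧ Sb n ≤ Sa k} (K n)) :
    Tendsto (fun n => (Sf n + Sg (K n)) / Sb n) atTop (𝓝 (F / H + G / α)) := by
  have hSb : Tendsto Sb atTop atBot := by
    refine (hb.neg_mul_atTop hH tendsto_natCast_atTop_atTop).congr' ?_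
    filter_upwards [eventually_ge_atTop 1] with n hn
    have : (n : ℝ) ≠ 0 := by positivity
    field_simp
  have hKtop := tendsto_atTop_of_isGreatest hSb hK
  have hbK : Tendsto (fun n => Sb n / K n) atTop (𝓝 α) := by
    refine tendsto_div_of_le_of_le ha hKtop ?_ (hK.mono fun n hn => hn.1.2)
    filter_upwards [hK] with n hn
    by_contra! h
    exact Nat.not_succ_le_self _ (hn.2 ⟨Nat.le_add_left 1 _, h.le⟩)
  refine ((hf.div hb hH.ne).add ((hg.comp hKtop).div hbK hα)).congr' ?_
  filter_upwards [eventually_ge_atTop 1, hKtop.eventually_ge_atTop 1,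
    hSb.eventually_lt_atBot 0] with n hn hKn hSbn
  have : (n : ℝ) ≠ 0 := by positivity
  have : (K n : ℝ) ≠ 0 := by positivity
  simp only [Pi.div_apply, Function.comp_apply]
  field_simp [hSbn.ne]

end Hitting

theorem ae_tendsto_add_div_of_cylinder {A : Type*} [MeasurableSpace A] [MeasurableSingletonClass A]
    [Nonempty A] [Fintype A] {μ : Measure (ℕ → A)} {w : A → ℝ}
    (hcyl : ∀ (n : ℕ) (x : ℕ → A),
      μ {x' | ∀ l < n, x' l = x l} = ENNReal.ofReal (∏ l ∈ range n, w (x l)))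
    (hw : ∀ u, 0 ≤ w u) (φ ψ : A → ℝ) {α β : A → ℝ} (hα : ∀ u, 0 < α u) (hβ : ∀ u, 0 < β u)
    (hαw : ∑ u, w u * Real.log (α u) ≠ 0) (hβw : ∑ u, w u * Real.log (β u) < 0)
    {L : (ℕ → A) → ℕ → ℕ} {N : ℕ}
    (hL : ∀ x, ∀ n ≥ N, IsGreatest
      {k | 1 ≤ k ∧ ∏ l ∈ range n, β (x l) ≤ ∏ l ∈ range k, α (x l)} (L x n)) :
    ∀ᵐ x ∂μ, Tendsto (fun n : ℕ =>
      (∑ l ∈ range n, φ (x l) + ∑ l ∈ range (L x n), ψ (x l)) / ∑ l ∈ range n, Real.log (β (x l)))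
      atTop (𝓝 ((∑ u, w u * φ u) / (∑ u, w u * Real.log (β u)) +
        (∑ u, w u * ψ u) / (∑ u, w u * Real.log (α u)))) := by
  have hK (x : ℕ → A) : ∀ᶠ n in atTop, IsGreatest {k | 1 ≤ k ∧
      ∑ l ∈ range n, Real.log (β (x l)) ≤ ∑ l ∈ range k, Real.log (α (x l))} (L x n) := by
    refine eventually_atTop.2 ⟨N, fun n hn => ?_⟩
    simpa only [prod_le_prod_iff_sum_log_le (fun l _ => hβ (x l)) fun l _ => hα (x l)]
      using hL x n hn
  filter_upwards [ae_tendsto_average_of_cylinder hcyl hw φ,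
    ae_tendsto_average_of_cylinder hcyl hw fun u => Real.log (α u),
    ae_tendsto_average_of_cylinder hcyl hw fun u => Real.log (β u),
    ae_tendsto_average_of_cylinder hcyl hw ψ] with x hφ hα' hβ' hψ
  exact (tendsto_add_div_of_isGreatest hαw hβw hφ hα' hβ' hψ (hK x) :)

theorem sum_mul_log_neg {α : Type*} [Fintype α] {w c : α → ℝ} (hw : ∀ u, 0 ≤ w u)
    (hsum : ∑ u, w u = 1) (hc0 : ∀ u, 0 < c u) (hc1 : ∀ u, c u < 1) :
    ∑ u, w u * Real.log (c u) < 0 := by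
  obtain ⟨u₀, hu₀⟩ : ∃ u, 0 < w u := by
    by_contra! h
    linarith [sum_nonpos fun u (_ : u ∈ univ) => h u]
  have : 0 < ∑ u, w u * -Real.log (c u) :=
    sum_pos' (fun u _ => mul_nonneg (hw u) (neg_nonneg.2 (Real.log_nonpos (hc0 u).le (hc1 u).le)))
      ⟨u₀, mem_univ _, mul_pos hu₀ (neg_pos.2 (Real.log_neg (hc0 u₀) (hc1 u₀)))⟩
  simpa only [mul_neg, sum_neg_distrib, neg_pos] using this

section TiltedWeights

variable {ι : Type*} {κ : ι → Type*} {τ : (i : ι) → κ i → Type*} [∀ i j, Fintype (τ i j)]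

noncomputable def tiltedWeight (P : (i : ι) → κ i → ℝ) (a : (i : ι) → (j : κ i) → τ i j → ℝ)
    (t : ℝ) (u : Σ i, Σ j, τ i j) : ℝ :=
  P u.1 u.2.1 * (a u.1 u.2.1 u.2.2 ^ t / ∑ k, a u.1 u.2.1 k ^ t)

variable {P : (i : ι) → κ i → ℝ} {a : (i : ι) → (j : κ i) → τ i j → ℝ} {t : ℝ}

theorem tiltedWeight_nonneg (hP : ∀ i j, 0 ≤ P i j) (ha : ∀ i j k, 0 ≤ a i j k)
    (u : Σ i, Σ j, τ i j) : 0 ≤ tiltedWeight P a t u :=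
  mul_nonneg (hP _ _) (div_nonneg (Real.rpow_nonneg (ha _ _ _) t)
    (sum_nonneg fun k _ => Real.rpow_nonneg (ha _ _ k) t))

-- Only `≤`: an empty fibre has sum `0` whatever `P i j` is.
theorem sum_tiltedWeight_le {i : ι} {j : κ i} (hP : 0 ≤ P i j) :
    ∑ k, tiltedWeight P a t ⟨i, j, k⟩ ≤ P i j := by
  change ∑ k, P i j * (a i j k ^ t / ∑ k', a i j k' ^ t) ≤ P i j
  rw [← mul_sum, ← sum_div]
  exact mul_le_of_le_one_right hP (div_self_le_one _)

variable [Fintype ι] [∀ i, Fintype (κ i)] {w : (Σ i, Σ j, τ i j) → ℝ}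

theorem sum_mul_eq_of_sum_fiber (hw : ∀ i j, ∑ k, w ⟨i, j, k⟩ = P i j) (f : (i : ι) → κ i → ℝ) :
    ∑ u, w u * f u.1 u.2.1 = ∑ i, ∑ j, P i j * f i j := by
  simp only [Fintype.sum_sigma, ← sum_mul, hw]

theorem sum_fiber_eq_of_le (hle : ∀ i j, ∑ k, w ⟨i, j, k⟩ ≤ P i j)
    (hsum : ∑ u, w u = ∑ i, ∑ j, P i j) (i : ι) (j : κ i) : ∑ k, w ⟨i, j, k⟩ = P i j := by
  simp only [Fintype.sum_sigma] at hsum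
  have hi := (sum_eq_sum_iff_of_le fun i _ => sum_le_sum fun j _ => hle i j).1 hsum i (mem_univ _)
  exact (sum_eq_sum_iff_of_le fun j _ => hle i j).1 hi j (mem_univ _)

theorem sum_tiltedWeight_mul_log (hfib : ∀ i j, ∑ k, tiltedWeight P a t ⟨i, j, k⟩ = P i j)
    (ha : ∀ i j k, 0 < a i j k) (ht : ∑ i, ∑ j, P i j * Real.log (∑ k, a i j k ^ t) = 0) :
    ∑ u, tiltedWeight P a t u * Real.log (a u.1 u.2.1 u.2.2 ^ t / ∑ k, a u.1 u.2.1 k ^ t) =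
      t * ∑ u, tiltedWeight P a t u * Real.log (a u.1 u.2.1 u.2.2) := by
  have hlog (u : Σ i, Σ j, τ i j) : Real.log (a u.1 u.2.1 u.2.2 ^ t / ∑ k, a u.1 u.2.1 k ^ t) =
      t * Real.log (a u.1 u.2.1 u.2.2) - Real.log (∑ k, a u.1 u.2.1 k ^ t) := by
    rw [Real.log_div (Real.rpow_pos_of_pos (ha _ _ _) t).ne'
      (sum_pos (fun k _ => Real.rpow_pos_of_pos (ha _ _ k) t) ⟨u.2.2, mem_univ _⟩).ne',
      Real.log_rpow (ha _ _ _)]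
  simp only [hlog, mul_sub, sum_sub_distrib, mul_sum, sum_mul_eq_of_sum_fiber hfib
    (fun i j => Real.log (∑ k, a i j k ^ t)), ht, sub_zero]
  exact sum_congr rfl fun u _ => by ring

theorem sum_mul_log_div_eq_sub {p : ι → ℝ} (hp : ∀ i, p i ≠ 0)
    (hPsum : ∀ i, ∑ j, P i j = p i) :
    ∑ i, ∑ j, P i j * Real.log (P i j / p i) =
      ∑ i, ∑ j, P i j * Real.log (P i j) - ∑ i, p i * Real.log (p i) := by
  have hterm (i : ι) (j : κ i) :
      P i j * Real.log (P i j / p i) = P i j * Real.log (P i j) - P i j * Real.log (p i) := by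
    rcases eq_or_ne (P i j) 0 with h | h
    · simp [h]
    · rw [Real.log_div h (hp i), mul_sub]
  simp only [hterm, sum_sub_distrib, ← sum_mul, hPsum]

theorem sum_tiltedWeight_mul_log_div_add_div {p : ι → ℝ} {b : (i : ι) → κ i → ℝ}
    (hp : ∀ i, p i ≠ 0) (hPsum : ∀ i, ∑ j, P i j = p i)
    (hfib : ∀ i j, ∑ k, tiltedWeight P a t ⟨i, j, k⟩ = P i j) (ha : ∀ i j k, 0 < a i j k)
    (ht : ∑ i, ∑ j, P i j * Real.log (∑ k, a i j k ^ t) = 0)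
    (hA : ∑ u, tiltedWeight P a t u * Real.log (a u.1 u.2.1 u.2.2) ≠ 0) :
    (∑ u, tiltedWeight P a t u * Real.log (P u.1 u.2.1 / p u.1)) /
          (∑ u, tiltedWeight P a t u * Real.log (b u.1 u.2.1)) +
        (∑ u, tiltedWeight P a t u * Real.log (a u.1 u.2.1 u.2.2 ^ t / ∑ k, a u.1 u.2.1 k ^ t)) /
          (∑ u, tiltedWeight P a t u * Real.log (a u.1 u.2.1 u.2.2)) =
      (∑ i, ∑ j, P i j * Real.log (P i j) - ∑ i, p i * Real.log (p i)) /
          (∑ i, ∑ j, P i j * Real.log (b i j)) + t := by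
  rw [sum_tiltedWeight_mul_log hfib ha ht, mul_div_cancel_right₀ _ hA,
    sum_mul_eq_of_sum_fiber hfib fun i j => Real.log (P i j / p i),
    sum_mul_eq_of_sum_fiber hfib fun i j => Real.log (b i j), sum_mul_log_div_eq_sub hp hPsum]

end TiltedWeights

theorem stmt17_general (m : ℕ) (mi : Fin m → ℕ) (mij : (i : Fin m) → Fin (mi i) → ℕ)
    (p : Fin m → ℝ) (hp : ∀ i, 0 < p i) (hpsum : ∑ i, p i = 1)
    (P : (i : Fin m) → Fin (mi i) → ℝ)
    (hP : ∀ i j, 0 ≤ P i j) (hPsum : ∀ i, ∑ j, P i j = p i)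
    (b : (i : Fin m) → Fin (mi i) → ℝ)
    (a : (i : Fin m) → (j : Fin (mi i)) → Fin (mij i j) → ℝ)
    (hab : ∀ i j k, 0 < a i j k ∧ a i j k ≤ b i j) (hb : ∀ i j, b i j < 1)
    (tP : ℝ)
    (htPeq : ∑ i, ∑ j, P i j * Real.log (∑ k, a i j k ^ tP) = 0)
    (lamP : ℝ)
    (hlamP : lamP = (∑ i, ∑ j, P i j * Real.log (P i j) - ∑ i, p i * Real.log (p i)) /
      (∑ i, ∑ j, P i j * Real.log (b i j)))
    (μ : Measure (ℕ → Alph m mi mij))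
    (hcyl : ∀ (n : ℕ) (x : ℕ → Alph m mi mij),
      μ {x' | ∀ l < n, x' l = x l} =
        ENNReal.ofReal (∏ l ∈ Finset.range n,
          P (x l).1 (x l).2.1 *
            (a (x l).1 (x l).2.1 (x l).2.2 ^ tP / ∑ k, a (x l).1 (x l).2.1 k ^ tP)))
    (L : (ℕ → Alph m mi mij) → ℕ → ℕ) (N : ℕ)
    (hL : ∀ (x : ℕ → Alph m mi mij), ∀ n ≥ N, IsGreatest {k | 1 ≤ k ∧
      (∏ l ∈ Finset.range n, b (x l).1 (x l).2.1) ≤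
        ∏ l ∈ Finset.range k, a (x l).1 (x l).2.1 (x l).2.2} (L x n)) :
    ∀ᵐ x ∂μ, Filter.Tendsto (fun n : ℕ =>
      (∑ l ∈ Finset.range n, Real.log (P (x l).1 (x l).2.1 / p (x l).1) +
        ∑ l ∈ Finset.range (L x n),
          Real.log (a (x l).1 (x l).2.1 (x l).2.2 ^ tP / ∑ k, a (x l).1 (x l).2.1 k ^ tP)) /
        (∑ l ∈ Finset.range n, Real.log (b (x l).1 (x l).2.1)))
      Filter.atTop (nhds (lamP + tP)) := by
  rcases isEmpty_or_nonempty (Alph m mi mij) with hempty | _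
  · exact ae_of_all μ fun x => hempty.elim (x 0)
  have ha (u : Alph m mi mij) : 0 < a u.1 u.2.1 u.2.2 := (hab _ _ _).1
  have hba (u : Alph m mi mij) : a u.1 u.2.1 u.2.2 ≤ b u.1 u.2.1 := (hab _ _ _).2
  have hw := tiltedWeight_nonneg (t := tP) hP fun i j k => (hab i j k).1.le
  have hsum := sum_eq_one_of_cylinder (w := tiltedWeight P a tP) hcyl hw
  have hfib : ∀ i j, ∑ k, tiltedWeight P a tP ⟨i, j, k⟩ = P i j :=
    sum_fiber_eq_of_le (fun i j => sum_tiltedWeight_le (τ := fun i j => Fin (mij i j)) (hP i j))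
      (by rw [hsum, sum_congr rfl fun i _ => hPsum i, hpsum])
  have hH := sum_mul_log_neg hw hsum (fun u => (ha u).trans_le (hba u)) fun u => hb _ _
  have hA := sum_mul_log_neg hw hsum ha fun u => (hba u).trans_lt (hb _ _)
  rw [hlamP, ← sum_tiltedWeight_mul_log_div_add_div (b := b) (fun i => (hp i).ne') hPsum hfib
    (fun i j k => (hab i j k).1) htPeq hA.ne]
  exact (ae_tendsto_add_div_of_cylinder (w := tiltedWeight P a tP) hcyl hw
    (fun u => Real.log (P u.1 u.2.1 / p u.1))
    (fun u => Real.log (a u.1 u.2.1 u.2.2 ^ tP / ∑ k, a u.1 u.2.1 k ^ tP))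
    (α := fun u => a u.1 u.2.1 u.2.2) (β := fun u => b u.1 u.2.1) ha
    (fun u => (ha u).trans_le (hba u)) hA.ne hH hL :)

theorem stmt17 (m : ℕ) (mi : Fin m → ℕ) (mij : (i : Fin m) → Fin (mi i) → ℕ)
    (p : Fin m → ℝ) (hp : ∀ i, 0 < p i) (hpsum : ∑ i, p i = 1)
    (P : (i : Fin m) → Fin (mi i) → ℝ)
    (hP : ∀ i j, 0 ≤ P i j) (hPsum : ∀ i, ∑ j, P i j = p i)
    (b : (i : Fin m) → Fin (mi i) → ℝ)
    (a : (i : Fin m) → (j : Fin (mi i)) → Fin (mij i j) → ℝ)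
    (hab : ∀ i j k, 0 < a i j k ∧ a i j k ≤ b i j) (hb : ∀ i j, b i j < 1)
    (tP : ℝ) (htP : tP ∈ Set.Icc (0 : ℝ) 1)
    (htPeq : ∑ i, ∑ j, P i j * Real.log (∑ k, a i j k ^ tP) = 0)
    (lamP : ℝ)
    (hlamP : lamP = (∑ i, ∑ j, P i j * Real.log (P i j) - ∑ i, p i * Real.log (p i)) /
      (∑ i, ∑ j, P i j * Real.log (b i j)))
    (μ : Measure (ℕ → Alph m mi mij))
    (hcyl : ∀ (n : ℕ) (x : ℕ → Alph m mi mij),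
      μ {x' | ∀ l < n, x' l = x l} =
        ENNReal.ofReal (∏ l ∈ Finset.range n,
          P (x l).1 (x l).2.1 *
            (a (x l).1 (x l).2.1 (x l).2.2 ^ tP / ∑ k, a (x l).1 (x l).2.1 k ^ tP)))
    (L : (ℕ → Alph m mi mij) → ℕ → ℕ) (N : ℕ)
    (hL : ∀ (x : ℕ → Alph m mi mij), ∀ n ≥ N, IsGreatest {k | 1 ≤ k ∧
      (∏ l ∈ Finset.range n, b (x l).1 (x l).2.1) ≤
        ∏ l ∈ Finset.range k, a (x l).1 (x l).2.1 (x l).2.2} (L x n)) :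
    ∀ᵐ x ∂μ, Filter.Tendsto (fun n : ℕ =>
      (∑ l ∈ Finset.range n, Real.log (P (x l).1 (x l).2.1 / p (x l).1) +
        ∑ l ∈ Finset.range (L x n),
          Real.log (a (x l).1 (x l).2.1 (x l).2.2 ^ tP / ∑ k, a (x l).1 (x l).2.1 k ^ tP)) /
        (∑ l ∈ Finset.range n, Real.log (b (x l).1 (x l).2.1)))
      Filter.atTop (nhds (lamP + tP)) :=
  stmt17_general m mi mij p hp hpsum P hP hPsum b a hab hb tP htPeq lamP hlamP μ hcyl L N hL
end
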